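/- The unique degree-n polynomial solutions sₙ of sₙ'' + sₙ = −xⁿ and cₙ of cₙ'' + cₙ = xⁿ satisfy the recurrences cₙ(x) = xⁿ + n·sₙ₋₁'(x) and cₙ'(x) = −n·sₙ₋₁(x) for n ≥ 1. -/
import Mathlib

open Polynomial in
lemma odeZero (p : ℝ[X]) (h : derivative (derivative p) + p = 0) : p = 0 := by
  by_contra hp
  have h1 : p = -derivative (derivative p) := by linear_combination h
  have hd2 : (derivative (derivative p)).degree < p.degree := by
    rcases eq_or_ne (derivative p) 0 with h0 | h0
    · rw [h0, derivative_zero, degree_zero]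
      exact Ne.bot_lt (fun hb => hp (degree_eq_bot.mp hb))
    · exact (degree_derivative_lt h0).trans (degree_derivative_lt hp)
  have heq : p.degree = (derivative (derivative p)).degree := by
    conv_lhs => rw [h1]
    exact degree_neg _
  exact lt_irrefl _ (heq ▸ hd2)

open Polynomial in
theorem stmt14 (n : ℕ) (hn : 1 ≤ n) (c s : ℝ[X])
    (hc : derivative (derivative c) + c = X ^ n)
    (hs : derivative (derivative s) + s = -(X ^ (n - 1))) :
    c = X ^ n + C (n : ℝ) * derivative s ∧ derivative c = -(C (n : ℝ) * s) := by
  have h2 : derivative (derivative s) = -(X ^ (n - 1)) - s := by linear_combination hs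
  have h3 : derivative (derivative (derivative s))
      = -(C ((n - 1 : ℕ) : ℝ) * X ^ (n - 1 - 1)) - derivative s := by
    have := congrArg derivative h2
    simpa [derivative_X_pow] using this
  have hce : derivative (derivative (c - (X ^ n + C (n : ℝ) * derivative s)))
      + (c - (X ^ n + C (n : ℝ) * derivative s)) = 0 := by
    simp only [derivative_sub, derivative_add, derivative_X_pow, derivative_C_mul]
    linear_combination hc - C (n : ℝ) * h3
  have hc0 : c = X ^ n + C (n : ℝ) * derivative s := by
    have := odeZero _ hce
    linear_combination this
  refine ⟨hc0, ?_⟩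
  rw [hc0]
  simp only [derivative_add, derivative_X_pow, derivative_C_mul, h2]
  ring
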